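/- Let G ∈ ℝ^{n×n} be symmetric PSD with Tr(G) = n, and let z ∈ ℝⁿ be a random vector with ‖z‖² ≤ 2n/m almost surely and E[zzᵀ] = G/m. Then the matrix E = (1/m)G - zzᵀ satisfies E[E²] ⪯ (1/m²)(2nG - G²) in the Loewner order, and hence ‖E[E²]‖₂ ≤ 3n²/m². -/

import Mathlib

open Matrix BigOperators MeasureTheory

/-- Euclidean norm of a vector in `ℝⁿ`. -/
noncomputable def eunorm {n : ℕ} (x : Fin n → ℝ) : ℝ := Real.sqrt (∑ i, (x i) ^ 2)

/-- Spectral (operator) norm of a real matrix: supremum of `‖A x‖` over unit vectors `x`. -/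
noncomputable def specNorm {n m : ℕ} (A : Matrix (Fin n) (Fin m) ℝ) : ℝ :=
  sSup {c : ℝ | ∃ x : Fin m → ℝ, eunorm x = 1 ∧ c = eunorm (A.mulVec x)}

/-- Frobenius norm of a real matrix. -/
noncomputable def frobNorm {n m : ℕ} (A : Matrix (Fin n) (Fin m) ℝ) : ℝ :=
  Real.sqrt (∑ i, ∑ j, (A i j) ^ 2)

/-- The four Penrose conditions: `Ad` is the Moore–Penrose pseudoinverse of `A`. -/
def IsMoorePenrose {n m : ℕ} (A : Matrix (Fin n) (Fin m) ℝ)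
    (Ad : Matrix (Fin m) (Fin n) ℝ) : Prop :=
  A * Ad * A = A ∧ Ad * A * Ad = Ad ∧ (A * Ad)ᵀ = A * Ad ∧ (Ad * A)ᵀ = Ad * A

/-- `Ak` is a best rank-`k` approximation of `A` in Frobenius norm. -/
def IsBestRankApprox {n m : ℕ} (k : ℕ) (A Ak : Matrix (Fin n) (Fin m) ℝ) : Prop :=
  Ak.rank ≤ k ∧ ∀ C : Matrix (Fin n) (Fin m) ℝ, C.rank ≤ k → frobNorm (A - Ak) ≤ frobNorm (A - C)

/-!
Put `M = E[zzᵀ] = G/m` and `s = 2n/m`, so that `E = M - zzᵀ`. For every `x`,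
`xᵀE²x = ‖Mx‖² - 2 (z⬝x)(z⬝Mx) + (z⬝x)² ‖z‖²`, and replacing `‖z‖²` by its bound `s` makes the
right-hand side linear in `zzᵀ`; taking expectations gives `E[E²] ⪯ sM - M²`. Finally
`sM - M² = (s/2)² - (M - s/2)² ⪯ (s/2)²`, so `‖E[E²]‖₂ ≤ (n/m)² ≤ 3n²/m²`.
-/

open scoped MatrixOrder Matrix.Norms.L2Operator

noncomputable def entrywiseIntegral {Ω ι κ : Type*} [MeasurableSpace Ω] (μ : Measure Ω)
    (F : Ω → Matrix ι κ ℝ) : Matrix ι κ ℝ :=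
  of fun i j => ∫ ω, F ω i j ∂μ

lemma le_of_dotProduct_mulVec_le {ι : Type*} [Fintype ι] {A B : Matrix ι ι ℝ}
    (hA : A.IsHermitian) (hB : B.IsHermitian) (h : ∀ x, x ⬝ᵥ A *ᵥ x ≤ x ⬝ᵥ B *ᵥ x) : A ≤ B :=
  le_iff.mpr <| .of_dotProduct_mulVec_nonneg (hB.sub hA) fun x => by
    simpa [sub_mulVec, dotProduct_sub] using h x

lemma Matrix.IsHermitian.dotProduct_mul_self_mulVec {ι : Type*} [Fintype ι] {A : Matrix ι ι ℝ}
    (hA : A.IsHermitian) (x : ι → ℝ) : x ⬝ᵥ (A * A) *ᵥ x = (A *ᵥ x) ⬝ᵥ (A *ᵥ x) := by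
  rw [← mulVec_mulVec, dotProduct_mulVec, ← mulVec_transpose,
    ← conjTranspose_eq_transpose_of_trivial, hA.eq]

section EntrywiseIntegral

variable {Ω ι κ : Type*} [MeasurableSpace Ω] {μ : Measure Ω}

lemma isHermitian_entrywiseIntegral {F : Ω → Matrix ι ι ℝ} (hF : ∀ ω, (F ω).IsHermitian) :
    (entrywiseIntegral μ F).IsHermitian :=
  IsHermitian.ext fun i j => by
    simp only [entrywiseIntegral, of_apply, star_trivial]
    exact integral_congr_ae (ae_of_all _ fun ω => by simpa using (hF ω).apply i j)

lemma memLp_top_mul_apply {ν : Type*} [Fintype κ] {F : Ω → Matrix ι κ ℝ} {H : Ω → Matrix κ ν ℝ}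
    (hF : ∀ i j, MemLp (fun ω => F ω i j) ⊤ μ) (hH : ∀ i j, MemLp (fun ω => H ω i j) ⊤ μ)
    (i : ι) (j : ν) : MemLp (fun ω => (F ω * H ω) i j) ⊤ μ := by
  simp only [mul_apply]
  exact memLp_finsetSum _ fun k _ => (hH k j).mul (hF i k)

variable [Fintype ι] [Fintype κ]

lemma integrable_dotProduct_mulVec {F : Ω → Matrix ι κ ℝ}
    (hF : ∀ i j, Integrable (fun ω => F ω i j) μ) (x : ι → ℝ) (y : κ → ℝ) :
    Integrable (fun ω => x ⬝ᵥ F ω *ᵥ y) μ := by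
  simp only [dotProduct, mulVec, Finset.mul_sum]
  exact integrable_finsetSum _ fun i _ => integrable_finsetSum _ fun j _ =>
    ((hF i j).mul_const _).const_mul _

lemma dotProduct_mulVec_entrywiseIntegral {F : Ω → Matrix ι κ ℝ}
    (hF : ∀ i j, Integrable (fun ω => F ω i j) μ) (x : ι → ℝ) (y : κ → ℝ) :
    x ⬝ᵥ entrywiseIntegral μ F *ᵥ y = ∫ ω, x ⬝ᵥ F ω *ᵥ y ∂μ := by
  simp only [dotProduct, mulVec, entrywiseIntegral, of_apply, Finset.mul_sum]
  rw [integral_finsetSum _ fun i _ => integrable_finsetSum _ fun j _ =>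
    ((hF i j).mul_const _).const_mul _]
  refine Finset.sum_congr rfl fun i _ => ?_
  rw [integral_finsetSum _ fun j _ => ((hF i j).mul_const _).const_mul _]
  refine Finset.sum_congr rfl fun j _ => ?_
  rw [integral_const_mul, integral_mul_const]

lemma entrywiseIntegral_nonneg {F : Ω → Matrix ι ι ℝ} (hF : ∀ ω, 0 ≤ F ω)
    (hFi : ∀ i j, Integrable (fun ω => F ω i j) μ) : 0 ≤ entrywiseIntegral μ F := by
  have hF' := fun ω => nonneg_iff_posSemidef.mp (hF ω)
  refine nonneg_iff_posSemidef.mpr <| .of_dotProduct_mulVec_nonneg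
    (isHermitian_entrywiseIntegral fun ω => (hF' ω).1) fun x => ?_
  rw [dotProduct_mulVec_entrywiseIntegral hFi]
  exact integral_nonneg fun ω => by simpa using (hF' ω).dotProduct_mulVec_nonneg x

end EntrywiseIntegral

section RankOne

variable {ι Ω : Type*} [MeasurableSpace Ω] {μ : Measure Ω} {z : Ω → ι → ℝ}

lemma memLp_top_vecMulVec_apply (hz : ∀ i, MemLp (fun ω => z ω i) ⊤ μ) (i j : ι) :
    MemLp (fun ω => vecMulVec (z ω) (z ω) i j) ⊤ μ := by
  simpa [vecMulVec_apply] using (hz j).mul' (hz i)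

variable [Fintype ι]

lemma isHermitian_vecMulVec_self (z : ι → ℝ) : (vecMulVec z z).IsHermitian := by
  simpa using (posSemidef_vecMulVec_self_star z).1

lemma dotProduct_mulVec_vecMulVec_self (z x y : ι → ℝ) :
    x ⬝ᵥ vecMulVec z z *ᵥ y = (z ⬝ᵥ x) * (z ⬝ᵥ y) := by
  rw [vecMulVec_mulVec]
  simp [dotProduct_comm x z, mul_comm]

lemma dotProduct_mulVec_sq_sub_vecMulVec_le {M : Matrix ι ι ℝ} (hM : M.IsHermitian)
    {z : ι → ℝ} {s : ℝ} (hz : z ⬝ᵥ z ≤ s) (x : ι → ℝ) :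
    x ⬝ᵥ ((M - vecMulVec z z) * (M - vecMulVec z z)) *ᵥ x ≤
      x ⬝ᵥ (M * M) *ᵥ x - 2 * (x ⬝ᵥ vecMulVec z z *ᵥ (M *ᵥ x)) +
        s * (x ⬝ᵥ vecMulVec z z *ᵥ x) := by
  have hMx : (M - vecMulVec z z) *ᵥ x = M *ᵥ x - (z ⬝ᵥ x) • z := by
    rw [sub_mulVec, vecMulVec_mulVec]; simp
  rw [(hM.sub (isHermitian_vecMulVec_self z)).dotProduct_mul_self_mulVec,
    hM.dotProduct_mul_self_mulVec, hMx, dotProduct_mulVec_vecMulVec_self,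
    dotProduct_mulVec_vecMulVec_self]
  simp only [sub_dotProduct, dotProduct_sub, smul_dotProduct, dotProduct_smul, smul_eq_mul,
    dotProduct_comm (M *ᵥ x) z]
  nlinarith [mul_le_mul_of_nonneg_left hz (sq_nonneg (z ⬝ᵥ x))]

lemma memLp_top_apply_of_dotProduct_self_le (hz : ∀ i, AEStronglyMeasurable (fun ω => z ω i) μ)
    {s : ℝ} (hs : ∀ᵐ ω ∂μ, z ω ⬝ᵥ z ω ≤ s) (i : ι) : MemLp (fun ω => z ω i) ⊤ μ := by
  refine memLp_top_of_bound (hz i) √s (hs.mono fun ω hω => ?_)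
  rw [Real.norm_eq_abs, ← Real.sqrt_sq_eq_abs]
  refine Real.sqrt_le_sqrt (le_trans ?_ hω)
  simpa [dotProduct, sq] using
    Finset.single_le_sum (fun j _ => mul_self_nonneg (z ω j)) (Finset.mem_univ i)

lemma memLp_top_sub_vecMulVec_mul_self_apply [IsFiniteMeasure μ]
    (hz : ∀ i, MemLp (fun ω => z ω i) ⊤ μ) (M : Matrix ι ι ℝ) (i j : ι) :
    MemLp (fun ω => ((M - vecMulVec (z ω) (z ω)) * (M - vecMulVec (z ω) (z ω))) i j) ⊤ μ :=
  have hE i j := (memLp_const (M i j)).sub (memLp_top_vecMulVec_apply hz i j)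
  memLp_top_mul_apply hE hE i j

lemma isHermitian_entrywiseIntegral_vecMulVec :
    (entrywiseIntegral μ fun ω => vecMulVec (z ω) (z ω)).IsHermitian :=
  isHermitian_entrywiseIntegral fun ω => isHermitian_vecMulVec_self (z ω)

lemma entrywiseIntegral_sub_vecMulVec_mul_self_nonneg [IsFiniteMeasure μ]
    (hz : ∀ i, MemLp (fun ω => z ω i) ⊤ μ) {M : Matrix ι ι ℝ} (hM : M.IsHermitian) :
    0 ≤ entrywiseIntegral μ fun ω => (M - vecMulVec (z ω) (z ω)) * (M - vecMulVec (z ω) (z ω)) :=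
  entrywiseIntegral_nonneg
    (fun ω => (hM.sub (isHermitian_vecMulVec_self (z ω))).isSelfAdjoint.mul_self_nonneg)
    fun i j => (memLp_top_sub_vecMulVec_mul_self_apply hz M i j).integrable le_top

theorem entrywiseIntegral_sub_vecMulVec_mul_self_le [IsProbabilityMeasure μ]
    (hz : ∀ i, MemLp (fun ω => z ω i) ⊤ μ) {s : ℝ} (hs : ∀ᵐ ω ∂μ, z ω ⬝ᵥ z ω ≤ s)
    {M : Matrix ι ι ℝ} (hM : entrywiseIntegral μ (fun ω => vecMulVec (z ω) (z ω)) = M) :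
    entrywiseIntegral μ (fun ω => (M - vecMulVec (z ω) (z ω)) * (M - vecMulVec (z ω) (z ω))) ≤
      s • M - M * M := by
  have hP i j := (memLp_top_vecMulVec_apply hz i j).integrable le_top
  have hE2 i j := (memLp_top_sub_vecMulVec_mul_self_apply hz M i j).integrable le_top
  have hMh : M.IsHermitian := hM ▸ isHermitian_entrywiseIntegral_vecMulVec
  refine le_of_dotProduct_mulVec_le
    (isHermitian_entrywiseIntegral fun ω =>
      (hMh.sub (isHermitian_vecMulVec_self (z ω))).isSelfAdjoint.mul_self_nonneg.isSelfAdjoint)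
    (((IsSelfAdjoint.all s).smul hMh).sub hMh.isSelfAdjoint.mul_self_nonneg.isSelfAdjoint)
    fun x => ?_
  have hPx := integrable_dotProduct_mulVec hP x
  rw [dotProduct_mulVec_entrywiseIntegral hE2]
  calc ∫ ω, x ⬝ᵥ ((M - vecMulVec (z ω) (z ω)) * (M - vecMulVec (z ω) (z ω))) *ᵥ x ∂μ
      ≤ ∫ ω, x ⬝ᵥ (M * M) *ᵥ x - 2 * (x ⬝ᵥ vecMulVec (z ω) (z ω) *ᵥ (M *ᵥ x)) +
          s * (x ⬝ᵥ vecMulVec (z ω) (z ω) *ᵥ x) ∂μ :=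
        integral_mono_ae (integrable_dotProduct_mulVec hE2 x x)
          (((integrable_const _).sub ((hPx _).const_mul 2)).add ((hPx x).const_mul s))
          (hs.mono fun ω hω => dotProduct_mulVec_sq_sub_vecMulVec_le hMh hω x)
    _ = x ⬝ᵥ (M * M) *ᵥ x - 2 * (x ⬝ᵥ M *ᵥ (M *ᵥ x)) + s * (x ⬝ᵥ M *ᵥ x) := by
        rw [integral_add ?_ ((hPx x).const_mul s),
          integral_sub (integrable_const _) ((hPx _).const_mul 2), integral_const,
          integral_const_mul, integral_const_mul, ← dotProduct_mulVec_entrywiseIntegral hP,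
          ← dotProduct_mulVec_entrywiseIntegral hP, hM, probReal_univ, one_smul]
        exact (integrable_const _).sub ((hPx _).const_mul 2)
    _ = x ⬝ᵥ (s • M - M * M) *ᵥ x := by
        rw [mulVec_mulVec, sub_mulVec, smul_mulVec, dotProduct_sub, dotProduct_smul, smul_eq_mul]
        ring

end RankOne

section OperatorNorm

variable {ι : Type*} [Fintype ι] [DecidableEq ι]

lemma smul_sub_mul_self_le_sq_smul_one {M : Matrix ι ι ℝ} (hM : M.IsHermitian) (s : ℝ) :
    s • M - M * M ≤ (s / 2) ^ 2 • (1 : Matrix ι ι ℝ) := by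
  have hN : (M - (s / 2) • 1 : Matrix ι ι ℝ).IsHermitian :=
    hM.sub ((IsSelfAdjoint.all _).smul (isHermitian_one (α := ℝ)))
  refine sub_nonneg.mp (le_of_le_of_eq hN.isSelfAdjoint.mul_self_nonneg ?_)
  simp only [sub_mul, mul_sub, smul_mul_assoc, mul_smul_comm, mul_one, one_mul]
  module

lemma l2_opNorm_le_of_le_smul_one {A : Matrix ι ι ℝ} (hA : 0 ≤ A) {c : ℝ} (hc : 0 ≤ c)
    (hAc : A ≤ c • 1) : ‖A‖ ≤ c := by
  have hsymm : (toEuclideanCLM (𝕜 := ℝ) A :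
      EuclideanSpace ℝ ι →ₗ[ℝ] EuclideanSpace ℝ ι).IsSymmetric := by
    rw [coe_toEuclideanCLM_eq_toEuclideanLin, isSymmetric_toEuclideanLin_iff]
    exact (nonneg_iff_posSemidef.mp hA).1
  rw [← l2_opNorm_toEuclideanCLM, ContinuousLinearMap.norm_eq_iSup_rayleighQuotient _ hsymm]
  refine ciSup_le fun x => ?_
  have h0 := (nonneg_iff_posSemidef.mp hA).dotProduct_mulVec_nonneg x.ofLp
  have h1 := (le_iff.mp hAc).dotProduct_mulVec_nonneg x.ofLp
  simp only [star_trivial, sub_mulVec, smul_mulVec, one_mulVec, dotProduct_sub, dotProduct_smul,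
    smul_eq_mul, sub_nonneg] at h0 h1
  rw [ContinuousLinearMap.rayleighQuotient, ContinuousLinearMap.reApplyInnerSelf_apply,
    real_inner_comm, inner_toEuclideanCLM, RCLike.re_to_real, abs_div, abs_of_nonneg h0,
    abs_of_nonneg (by positivity)]
  refine div_le_of_le_mul₀ (by positivity) hc (h1.trans_eq ?_)
  rw [← real_inner_self_eq_norm_sq, EuclideanSpace.inner_eq_star_dotProduct, star_trivial]

end OperatorNorm

lemma eunorm_eq_norm_toLp {n : ℕ} (x : Fin n → ℝ) : eunorm x = ‖WithLp.toLp 2 x‖ := by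
  simp [eunorm, EuclideanSpace.norm_eq]

lemma eunorm_sq {n : ℕ} (x : Fin n → ℝ) : eunorm x ^ 2 = x ⬝ᵥ x := by
  rw [eunorm, Real.sq_sqrt (by positivity)]
  simp [dotProduct, sq]

lemma specNorm_le_l2_opNorm {n m : ℕ} (A : Matrix (Fin n) (Fin m) ℝ) : specNorm A ≤ ‖A‖ := by
  refine Real.sSup_le ?_ (norm_nonneg _)
  rintro _ ⟨x, hx, rfl⟩
  rw [eunorm_eq_norm_toLp] at hx ⊢
  simpa [hx] using l2_opNorm_mulVec A (WithLp.toLp 2 x)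

theorem bernstein_variance_bound_general {n m : ℕ}
    {Ω : Type*} [MeasurableSpace Ω] (μ : Measure Ω) [IsProbabilityMeasure μ]
    (G : Matrix (Fin n) (Fin n) ℝ)
    (z : Ω → Fin n → ℝ) (hmeas : ∀ i, Measurable fun ω => z ω i)
    (hbound : ∀ᵐ ω ∂μ, (eunorm (z ω)) ^ 2 ≤ 2 * n / m)
    (hexp : ∀ i j, ∫ ω, z ω i * z ω j ∂μ = G i j / m)
    (EE2 : Matrix (Fin n) (Fin n) ℝ)
    (hEE2 : EE2 = Matrix.of fun i j => ∫ ω,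
      ((((1 / (m : ℝ)) • G - Matrix.vecMulVec (z ω) (z ω)) *
        ((1 / (m : ℝ)) • G - Matrix.vecMulVec (z ω) (z ω))) i j) ∂μ) :
    ((1 / (m : ℝ) ^ 2) • ((2 * (n : ℝ)) • G - G * G) - EE2).PosSemidef ∧
      specNorm EE2 ≤ 3 * n ^ 2 / m ^ 2 := by
  have hs : ∀ᵐ ω ∂μ, z ω ⬝ᵥ z ω ≤ 2 * n / m := by simpa only [eunorm_sq] using hbound
  have hz := memLp_top_apply_of_dotProduct_self_le (fun i => (hmeas i).aestronglyMeasurable) hs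
  have hM : entrywiseIntegral μ (fun ω => vecMulVec (z ω) (z ω)) = (1 / (m : ℝ)) • G := by
    ext i j
    simp [entrywiseIntegral, vecMulVec_apply, hexp, div_eq_inv_mul]
  have hMh : ((1 / (m : ℝ)) • G).IsHermitian := hM ▸ isHermitian_entrywiseIntegral_vecMulVec
  change EE2 = entrywiseIntegral μ _ at hEE2
  have hle := hEE2 ▸ entrywiseIntegral_sub_vecMulVec_mul_self_le hz hs hM
  refine ⟨le_iff.mp (hle.trans_eq ?_), ?_⟩
  · rw [smul_mul_smul_comm]
    module
  · calc specNorm EE2 ≤ ‖EE2‖ := specNorm_le_l2_opNorm EE2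
      _ ≤ (2 * n / m / 2) ^ 2 :=
        l2_opNorm_le_of_le_smul_one (hEE2 ▸ entrywiseIntegral_sub_vecMulVec_mul_self_nonneg hz hMh)
          (sq_nonneg _) (hle.trans (smul_sub_mul_self_le_sq_smul_one hMh _))
      _ ≤ 3 * n ^ 2 / m ^ 2 := by
        rw [show (2 * n / m / 2 : ℝ) ^ 2 = 1 * (n ^ 2 / m ^ 2) by ring, mul_div_assoc]
        gcongr
        norm_num

/-- Let `G` be symmetric PSD with `Tr(G) = n`, and let `z` be a random vector
with `‖z‖² ≤ 2n/m` a.s. and `E[zzᵀ] = G/m`. Then `E = (1/m)G - zzᵀ` satisfies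
`E[E²] ⪯ (1/m²)(2nG - G²)` in the Loewner order and `‖E[E²]‖₂ ≤ 3n²/m²`. -/
theorem bernstein_variance_bound {n m : ℕ} (hm : 0 < m)
    {Ω : Type*} [MeasurableSpace Ω] (μ : Measure Ω) [IsProbabilityMeasure μ]
    (G : Matrix (Fin n) (Fin n) ℝ) (hG : G.PosSemidef) (htr : G.trace = (n : ℝ))
    (z : Ω → Fin n → ℝ) (hmeas : ∀ i, Measurable fun ω => z ω i)
    (hbound : ∀ᵐ ω ∂μ, (eunorm (z ω)) ^ 2 ≤ 2 * n / m)
    (hexp : ∀ i j, ∫ ω, z ω i * z ω j ∂μ = G i j / m)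
    (EE2 : Matrix (Fin n) (Fin n) ℝ)
    (hEE2 : EE2 = Matrix.of fun i j => ∫ ω,
      ((((1 / (m : ℝ)) • G - Matrix.vecMulVec (z ω) (z ω)) *
        ((1 / (m : ℝ)) • G - Matrix.vecMulVec (z ω) (z ω))) i j) ∂μ) :
    ((1 / (m : ℝ) ^ 2) • ((2 * (n : ℝ)) • G - G * G) - EE2).PosSemidef ∧
      specNorm EE2 ≤ 3 * n ^ 2 / m ^ 2 :=
  bernstein_variance_bound_general μ G z hmeas hbound hexp EE2 hEE2
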